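/- arXiv:2601.06534 — 3 statements merged into one kernel-verified Lean document; each statement's English description precedes it below -/
import Mathlib

section
/- In the admissibility setting with (p,q) ≠ (∞,1), for x ∈ F^u_τ and t ≥ τ one has ‖x‖_τ ≤ 2Ke^c‖G‖²·(t−τ)^{−(1−1/q+1/p)}·‖T(t,τ)x‖_t. Consequently there exists T > 0 such that ‖T(t,τ)x‖_t ≥ 2‖x‖_τ whenever t − τ ≥ T. -/
open MeasureTheory Set Filter
open scoped ENNReal

/-- The `L^p`-norm of a function `f : ℝ → X` with respect to a family of norms
`N t = ‖·‖_t` on `X` (ess sup when `p = ∞`). -/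
noncomputable def famLpNorm {X : Type*} [NormedAddCommGroup X]
    (N : ℝ → X → ℝ) (p : ℝ≥0∞) (f : ℝ → X) : ℝ≥0∞ :=
  if p = ∞ then essSup (fun t => ENNReal.ofReal (N t (f t))) volume
  else (∫⁻ t, ENNReal.ofReal (N t (f t)) ^ p.toReal) ^ (1 / p.toReal)

/-- Membership in `Y₁ = L^p ∩ C_b` with respect to the family of norms `N`. -/
def MemY1 {X : Type*} [NormedAddCommGroup X]
    (N : ℝ → X → ℝ) (p : ℝ≥0∞) (x : ℝ → X) : Prop :=
  Continuous x ∧ (∃ M, ∀ t, N t (x t) ≤ M) ∧ famLpNorm N p x < ∞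

/-- Membership in `Y₂ = L^q` with respect to the family of norms `N`. -/
def MemY2 {X : Type*} [NormedAddCommGroup X]
    (N : ℝ → X → ℝ) (q : ℝ≥0∞) (y : ℝ → X) : Prop :=
  AEStronglyMeasurable y volume ∧ famLpNorm N q y < ∞

/-- `x` solves the inhomogeneous integral equation
`x t = T t τ (x τ) + ∫_τ^t T t s (y s) ds` associated with the evolutionary family `T`. -/
def SolvesEq {X : Type*} [NormedAddCommGroup X] [NormedSpace ℝ X]
    (T : ℝ → ℝ → X →L[ℝ] X) (x y : ℝ → X) : Prop :=
  ∀ τ t, τ ≤ t → x t = T t τ (x τ) + ∫ s in Ioc τ t, T t s (y s)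

/-- The stable set `F^s_τ`: points with forward trajectory bounded in the norms `‖·‖_t`
whose zero-extension lies in `L^p`. -/
def Fs {X : Type*} [NormedAddCommGroup X] [NormedSpace ℝ X]
    (T : ℝ → ℝ → X →L[ℝ] X) (N : ℝ → X → ℝ) (p : ℝ≥0∞) (τ : ℝ) : Set X :=
  {x | (∃ M, ∀ t, τ ≤ t → N t (T t τ x) ≤ M) ∧
    famLpNorm N p (fun t => if τ ≤ t then T t τ x else 0) < ∞}

/-- The unstable set `F^u_τ`: points admitting a backward trajectory bounded in the norms
`‖·‖_t` whose zero-extension lies in `L^p`. -/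
def Fu {X : Type*} [NormedAddCommGroup X] [NormedSpace ℝ X]
    (T : ℝ → ℝ → X →L[ℝ] X) (N : ℝ → X → ℝ) (p : ℝ≥0∞) (τ : ℝ) : Set X :=
  {x | ∃ φ : ℝ → X, φ τ = x ∧ (∀ s t, s ≤ t → t ≤ τ → φ t = T t s (φ s)) ∧
    (∃ M, ∀ t, t ≤ τ → N t (φ t) ≤ M) ∧
    famLpNorm N p (fun t => if t ≤ τ then φ t else 0) < ∞}

/-!
Extend `u ∈ F^u_τ` to an entire trajectory `w` of `T`: its past is bounded and in `L^p`, and its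
future grows at most like `K e^{c(t-s)}`. For `a ≤ b` the pair `v = (∫_ξ^∞ 𝟙_(a,b]) • w`,
`y = -𝟙_(a,b] • w` solves the integral equation, so the bound on `G` applies to it.

For `(a, b) = (τ, t)` the sup-bound at `τ` gives `(t - τ) ‖u‖_τ ≤ ‖G‖ ‖𝟙_(τ,t] w‖_q`, and Hölder
on `(τ, t]` bounds this by `‖G‖ (t - τ)^{1/q - 1/p} ‖𝟙_(τ,t] w‖_p`. For a unit interval
`(a, a + 1]` beyond `t` on which `e^{c(ξ - t)} ≤ e^c`, `v = w` on `(-∞, t]`, and the `L^p`-bound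
gives `‖𝟙_(-∞,t] w‖_p ≤ ‖G‖ K e^c ‖T(t,τ)u‖_t`. Together,
`‖u‖_τ ≤ K e^c ‖G‖² (t - τ)^{-(1 - 1/q + 1/p)} ‖T(t,τ)u‖_t`; for `(p, q) ≠ (∞, 1)` the exponent
is negative, so the factor drops below `1/2` once `t - τ` is large.
-/

section
variable {α F : Type*} [MeasurableSpace α] [NormedAddCommGroup F] {μ : Measure α}
  {p q : ℝ≥0∞}

theorem eLpNorm_indicator_le_of_forall_le {s : Set α} (hs : MeasurableSet s) {f : α → F}
    {C : ℝ} (hf : ∀ x ∈ s, ‖f x‖ ≤ C) :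
    eLpNorm (s.indicator f) p μ ≤ μ s ^ p.toReal⁻¹ * ENNReal.ofReal C := by
  rw [eLpNorm_indicator_eq_eLpNorm_restrict hs, ← Measure.restrict_apply_univ]
  exact eLpNorm_le_of_ae_bound ((ae_restrict_iff' hs).2 (Eventually.of_forall hf))

theorem eLpNorm_indicator_le_eLpNorm_indicator_mul_rpow {s : Set α} (hs : MeasurableSet s)
    {f : α → F} (hf : AEStronglyMeasurable f μ) (hqp : q ≤ p) :
    eLpNorm (s.indicator f) q μ ≤
      eLpNorm (s.indicator f) p μ * μ s ^ (1 / q.toReal - 1 / p.toReal) := by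
  rw [eLpNorm_indicator_eq_eLpNorm_restrict hs, eLpNorm_indicator_eq_eLpNorm_restrict hs,
    ← Measure.restrict_apply_univ]
  exact eLpNorm_le_eLpNorm_mul_rpow_measure_univ hqp hf.restrict

theorem eLpNorm_indicator_Ioc_lt_top {f : ℝ → F} {a b C : ℝ}
    (hf : ∀ x ∈ Ioc a b, ‖f x‖ ≤ C) : eLpNorm ((Ioc a b).indicator f) p volume < ∞ :=
  (eLpNorm_indicator_le_of_forall_le measurableSet_Ioc hf).trans_lt <| ENNReal.mul_lt_top
    (ENNReal.rpow_lt_top_of_nonneg (by positivity) measure_Ioc_lt_top.ne) ENNReal.ofReal_lt_top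

theorem eLpNorm_indicator_Iic_lt_top {g : ℝ → F} (hp : 1 ≤ p) (hg : AEStronglyMeasurable g)
    {τ b C : ℝ} (hτ : eLpNorm ((Iic τ).indicator g) p volume < ∞)
    (hC : ∀ ξ ∈ Ioc τ b, ‖g ξ‖ ≤ C) : eLpNorm ((Iic b).indicator g) p volume < ∞ :=
  calc eLpNorm ((Iic b).indicator g) p volume
      ≤ eLpNorm ((Iic (max τ b)).indicator g) p volume := eLpNorm_mono fun _ =>
        norm_indicator_le_of_subset (Iic_subset_Iic.2 (le_max_right τ b)) _ _
    _ = eLpNorm ((Iic τ).indicator g + (Ioc τ (max τ b)).indicator g) p volume := by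
        rw [← Iic_union_Ioc_eq_Iic (le_max_left τ b),
          indicator_union_of_disjoint (Iic_disjoint_Ioc le_rfl)]
        rfl
    _ ≤ eLpNorm ((Iic τ).indicator g) p volume
          + eLpNorm ((Ioc τ (max τ b)).indicator g) p volume :=
        eLpNorm_add_le (hg.indicator measurableSet_Iic) (hg.indicator measurableSet_Ioc) hp
    _ < ∞ := ENNReal.add_lt_top.2 ⟨hτ, eLpNorm_indicator_Ioc_lt_top fun ξ hξ =>
        hC ξ ⟨hξ.1, (le_max_iff.1 hξ.2).resolve_left hξ.1.not_ge⟩⟩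

end

theorem measurable_apply_of_continuous {X : Type*} [TopologicalSpace X] {N : ℝ → X → ℝ}
    (hcont : ∀ t, Continuous (N t)) (hmeas : ∀ u, Measurable fun t => N t u) {w : ℝ → X}
    (hw : Continuous w) : Measurable fun t => N t (w t) :=
  (measurable_uncurry_of_continuous_of_measurable (u := fun s t => N t (w s))
    (fun t => (hcont t).comp hw) (fun s => hmeas (w s))).comp
    (measurable_id.prodMk measurable_id)

theorem Seminorm.continuous_of_le_mul_norm {X : Type*} [SeminormedAddCommGroup X]
    [NormedSpace ℝ X] (S : Seminorm ℝ X) {C : ℝ} (hC : ∀ u, S u ≤ C * ‖u‖) : Continuous S :=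
  LipschitzWith.continuous (K := C.toNNReal) <| LipschitzWith.of_dist_le_mul fun u v => by
    rw [Real.dist_eq, dist_eq_norm]
    exact (abs_sub_map_le_sub S u v).trans <| (hC _).trans <|
      mul_le_mul_of_nonneg_right (Real.le_coe_toNNReal C) (norm_nonneg _)

/-- `tailLength a b ξ = ∫_ξ^∞ 𝟙_(a,b]`, the scalar factor of the paper's test function `v₂`. -/
def tailLength (a b ξ : ℝ) : ℝ := max 0 (min (b - a) (b - ξ))

section TailLength
variable {a b : ℝ}

theorem tailLength_nonneg (ξ : ℝ) : 0 ≤ tailLength a b ξ := le_max_left _ _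

theorem tailLength_le (hab : a ≤ b) (ξ : ℝ) : tailLength a b ξ ≤ b - a :=
  max_le (sub_nonneg.2 hab) (min_le_left _ _)

theorem tailLength_of_le {ξ : ℝ} (hab : a ≤ b) (hξ : ξ ≤ a) :
    tailLength a b ξ = b - a := by
  rw [tailLength, min_eq_left (by linarith), max_eq_right (by linarith)]

theorem tailLength_of_ge {ξ : ℝ} (hξ : b ≤ ξ) : tailLength a b ξ = 0 :=
  max_eq_left (min_le_of_right_le (by linarith))

theorem continuous_tailLength : Continuous (tailLength a b) :=
  continuous_const.max (continuous_const.min (continuous_const.sub continuous_id))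

theorem tailLength_sub_tailLength (hab : a ≤ b) {σ₁ σ₂ : ℝ} (hσ : σ₁ ≤ σ₂) :
    tailLength a b σ₁ - tailLength a b σ₂ = volume.real (Ioc σ₁ σ₂ ∩ Ioc a b) := by
  rw [Ioc_inter_Ioc, Real.volume_real_Ioc]
  simp only [tailLength, max_def, min_def]
  split_ifs <;> linarith

end TailLength

section SeminormFamily
variable {X : Type*} [NormedAddCommGroup X] [NormedSpace ℝ X] (N : ℝ → Seminorm ℝ X)
  {p q : ℝ≥0∞} {w : ℝ → X}

theorem famLpNorm_eq_eLpNorm (hp : p ≠ 0) (f : ℝ → X) :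
    famLpNorm (fun t => N t) p f = eLpNorm (fun t => N t (f t)) p volume := by
  have h (t : ℝ) : ‖N t (f t)‖ₑ = ENNReal.ofReal (N t (f t)) :=
    Real.enorm_eq_ofReal (apply_nonneg _ _)
  rcases eq_or_ne p ∞ with rfl | hp'
  · simp only [famLpNorm, if_pos, eLpNorm_exponent_top, eLpNormEssSup, h]
  · simp only [famLpNorm, if_neg hp', eLpNorm_eq_eLpNorm' hp hp', eLpNorm', h]

theorem famLpNorm_indicator (hp : p ≠ 0) (s : Set ℝ) (f : ℝ → X) :
    famLpNorm (fun t => N t) p (s.indicator f) =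
      eLpNorm (s.indicator fun t => N t (f t)) p volume := by
  rw [famLpNorm_eq_eLpNorm N hp]
  congr 1
  ext t
  by_cases ht : t ∈ s <;> simp [ht]

theorem famLpNorm_neg (f : ℝ → X) :
    famLpNorm (fun t => N t) p (-f) = famLpNorm (fun t => N t) p f := by
  simp only [famLpNorm, Pi.neg_apply, map_neg_eq_map]

theorem memY1_tailLength_smul (hp : p ≠ 0) (hw : Continuous w) {a b C : ℝ} (hab : a ≤ b)
    (hC : ∀ t ≤ b, N t (w t) ≤ C)
    (hLp : eLpNorm ((Iic b).indicator fun t => N t (w t)) p volume < ∞) :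
    MemY1 (fun t => N t) p (fun t => tailLength a b t • w t) := by
  have hv (t : ℝ) : N t (tailLength a b t • w t) = tailLength a b t * N t (w t) := by
    rw [map_smul_eq_mul, Real.norm_of_nonneg (tailLength_nonneg t)]
  have hv_le (t : ℝ) :
      N t (tailLength a b t • w t) ≤ (b - a) * (Iic b).indicator (fun t => N t (w t)) t := by
    rw [hv]
    rcases le_or_gt t b with htb | htb
    · rw [indicator_of_mem (mem_Iic.2 htb)]
      exact mul_le_mul_of_nonneg_right (tailLength_le hab t) (apply_nonneg _ _)
    · rw [tailLength_of_ge htb.le, zero_mul]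
      exact mul_nonneg (sub_nonneg.2 hab) (indicator_nonneg (fun _ _ => apply_nonneg _ _) t)
  have hC0 : 0 ≤ C := (apply_nonneg _ _).trans (hC b le_rfl)
  refine ⟨continuous_tailLength.smul hw, ⟨(b - a) * C, fun t => (hv_le t).trans ?_⟩, ?_⟩
  · rcases le_or_gt t b with htb | htb
    · rw [indicator_of_mem (mem_Iic.2 htb)]
      exact mul_le_mul_of_nonneg_left (hC t htb) (sub_nonneg.2 hab)
    · rw [indicator_of_notMem (by simpa using htb), mul_zero]
      exact mul_nonneg (sub_nonneg.2 hab) hC0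
  · rw [famLpNorm_eq_eLpNorm N hp]
    calc eLpNorm (fun t => N t (tailLength a b t • w t)) p volume
        ≤ eLpNorm ((b - a) • (Iic b).indicator fun t => N t (w t)) p volume :=
          eLpNorm_mono_real fun t => by
            rw [Real.norm_of_nonneg (apply_nonneg _ _)]
            exact hv_le t
      _ ≤ ‖b - a‖ₑ * eLpNorm ((Iic b).indicator fun t => N t (w t)) p volume :=
          eLpNorm_const_smul_le
      _ < ∞ := ENNReal.mul_lt_top enorm_lt_top hLp

theorem memY2_neg_indicator (hq : q ≠ 0) (hw : Continuous w) {a b C : ℝ}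
    (hC : ∀ t ∈ Ioc a b, N t (w t) ≤ C) :
    MemY2 (fun t => N t) q (-(Ioc a b).indicator w) := by
  refine ⟨(hw.aestronglyMeasurable.indicator measurableSet_Ioc).neg, ?_⟩
  rw [famLpNorm_neg, famLpNorm_indicator N hq]
  exact eLpNorm_indicator_Ioc_lt_top fun t ht => by
    rw [Real.norm_of_nonneg (apply_nonneg _ _)]
    exact hC t ht

end SeminormFamily

def IsTrajectory {X : Type*} [NormedAddCommGroup X] [NormedSpace ℝ X]
    (T : ℝ → ℝ → X →L[ℝ] X) (w : ℝ → X) : Prop :=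
  ∀ s t, s ≤ t → w t = T t s (w s)

namespace IsTrajectory
variable {X : Type*} [NormedAddCommGroup X] [NormedSpace ℝ X] {T : ℝ → ℝ → X →L[ℝ] X}
  {w : ℝ → X}

theorem continuous (hw : IsTrajectory T w)
    (hCont : ∀ τ (u : X), ContinuousOn (fun t => T t τ u) (Ici τ)) : Continuous w :=
  continuous_iff_continuousAt.2 fun x =>
    ((hCont (x - 1) (w (x - 1))).congr fun t ht => hw (x - 1) t ht).continuousAt
      (Ici_mem_nhds (by linarith))

theorem solvesEq_tailLength [CompleteSpace X] (hw : IsTrajectory T w) {a b : ℝ} (hab : a ≤ b) :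
    SolvesEq T (fun ξ => tailLength a b ξ • w ξ) (-(Ioc a b).indicator w) := by
  intro σ₁ σ₂ hσ
  have hT : ∀ s ∈ Ioc σ₁ σ₂, T σ₂ s ((-(Ioc a b).indicator w) s) =
      (Ioc a b).indicator (fun _ => -w σ₂) s := by
    intro s hs
    by_cases hsab : s ∈ Ioc a b
    · simp [hsab, hw s σ₂ hs.2]
    · simp [hsab]
  rw [setIntegral_congr_fun measurableSet_Ioc hT, setIntegral_indicator measurableSet_Ioc,
    setIntegral_const, ← tailLength_sub_tailLength hab hσ, map_smul, ← hw σ₁ σ₂ hσ]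
  module

end IsTrajectory

/-- `normG` bounds `G = H⁻¹`, where `H x = y` means `SolvesEq T x y`, from `Y₂` to both the
sup- and the `L^p`-component of `Y₁`. -/
def SolutionOperatorBound {X : Type*} [NormedAddCommGroup X] [NormedSpace ℝ X]
    (T : ℝ → ℝ → X →L[ℝ] X) (N : ℝ → X → ℝ) (p q : ℝ≥0∞) (normG : ℝ) : Prop :=
  ∀ x y : ℝ → X, MemY1 N p x → MemY2 N q y → SolvesEq T x y →
    (∀ s, N s (x s) ≤ normG * (famLpNorm N q y).toReal) ∧
    famLpNorm N p x ≤ ENNReal.ofReal normG * famLpNorm N q y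

theorem exists_Ioc_mul_sub_le (c t : ℝ) :
    ∃ s ≥ t, ∀ ξ ∈ Ioc s (s + 1), c * (ξ - t) ≤ c := by
  rcases lt_or_ge c 0 with hc | hc
  · exact ⟨t + 1, by linarith, fun ξ hξ => by nlinarith [hξ.1]⟩
  · exact ⟨t, le_rfl, fun ξ hξ => by nlinarith [hξ.2]⟩

section Trajectory
variable {X : Type*} [NormedAddCommGroup X] [NormedSpace ℝ X] {T : ℝ → ℝ → X →L[ℝ] X}
  {N : ℝ → Seminorm ℝ X} {p q : ℝ≥0∞} {w : ℝ → X}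

theorem exists_isTrajectory_of_mem_Fu (hp : p ≠ 0)
    (hCoc : ∀ τ s t, τ ≤ s → s ≤ t → ∀ u, T t s (T s τ u) = T t τ u) {τ : ℝ} {u : X}
    (hu : u ∈ Fu T (fun t => N t) p τ) :
    ∃ w, IsTrajectory T w ∧ w τ = u ∧ (∃ M, ∀ t ≤ τ, N t (w t) ≤ M) ∧
      eLpNorm ((Iic τ).indicator fun t => N t (w t)) p volume < ∞ := by
  obtain ⟨φ, rfl, hφ, ⟨M, hM⟩, hLp⟩ := hu
  refine ⟨fun t => if t ≤ τ then φ t else T t τ (φ τ), ?_, if_pos le_rfl,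
    ⟨M, fun t ht => by simpa [ht] using hM t ht⟩, ?_⟩
  · intro s t hst
    by_cases ht : t ≤ τ
    · simp [ht, hst.trans ht, hφ s t hst ht]
    by_cases hs : s ≤ τ
    · simp [ht, hs, hφ s τ hs le_rfl, hCoc s τ t hs (not_le.1 ht).le]
    · simp [ht, hs, hCoc τ s t (not_le.1 hs).le hst]
  · rw [← famLpNorm_indicator N hp]
    convert hLp using 3 with t
    by_cases ht : t ≤ τ <;> simp [ht]

theorem IsTrajectory.exists_bound_Iic (hw : IsTrajectory T w) {K c : ℝ}
    (hBd : ∀ τ t (u : X), τ ≤ t → N t (T t τ u) ≤ K * Real.exp (c * (t - τ)) * N τ u)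
    (hK : 0 ≤ K) {τ M : ℝ} (hM : ∀ t ≤ τ, N t (w t) ≤ M) (b : ℝ) :
    ∃ C, ∀ t ≤ b, N t (w t) ≤ C := by
  refine ⟨max M (K * Real.exp (|c| * (b - τ)) * N τ (w τ)), fun t htb => ?_⟩
  rcases le_total t τ with htτ | hτt
  · exact (hM t htτ).trans (le_max_left _ _)
  have hexp : c * (t - τ) ≤ |c| * (b - τ) :=
    (mul_le_mul_of_nonneg_right (le_abs_self c) (sub_nonneg.2 hτt)).trans
      (mul_le_mul_of_nonneg_left (by linarith) (abs_nonneg c))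
  refine le_max_of_le_right ?_
  calc N t (w t) = N t (T t τ (w τ)) := by rw [← hw τ t hτt]
    _ ≤ K * Real.exp (c * (t - τ)) * N τ (w τ) := hBd τ t _ hτt
    _ ≤ K * Real.exp (|c| * (b - τ)) * N τ (w τ) := by gcongr

theorem SolutionOperatorBound.apply_tailLength_smul [CompleteSpace X] {normG : ℝ}
    (hG : SolutionOperatorBound T (fun t => N t) p q normG) (hw : IsTrajectory T w)
    (hwc : Continuous w) (hp : p ≠ 0) (hq : q ≠ 0) {a b C : ℝ} (hab : a ≤ b)
    (hC : ∀ t ≤ b, N t (w t) ≤ C)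
    (hLp : eLpNorm ((Iic b).indicator fun t => N t (w t)) p volume < ∞) :
    (∀ s, tailLength a b s * N s (w s) ≤
        normG * (eLpNorm ((Ioc a b).indicator fun t => N t (w t)) q volume).toReal) ∧
      eLpNorm (fun s => tailLength a b s * N s (w s)) p volume ≤
        ENNReal.ofReal normG * eLpNorm ((Ioc a b).indicator fun t => N t (w t)) q volume := by
  obtain ⟨hsup, hLp'⟩ := hG _ _ (memY1_tailLength_smul N hp hwc hab hC hLp)
    (memY2_neg_indicator N hq hwc fun t ht => hC t ht.2) (hw.solvesEq_tailLength hab)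
  have hv (s : ℝ) : N s (tailLength a b s • w s) = tailLength a b s * N s (w s) := by
    rw [map_smul_eq_mul, Real.norm_of_nonneg (tailLength_nonneg s)]
  rw [famLpNorm_neg, famLpNorm_indicator N hq] at hsup hLp'
  rw [famLpNorm_eq_eLpNorm N hp] at hLp'
  simp only [hv] at hsup hLp'
  exact ⟨hsup, hLp'⟩

theorem IsTrajectory.eLpNorm_indicator_Iic_le [CompleteSpace X] {normG K c : ℝ}
    (hG : SolutionOperatorBound T (fun t => N t) p q normG) (hw : IsTrajectory T w)
    (hwc : Continuous w) (hp : p ≠ 0) (hq : q ≠ 0)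
    (hBd : ∀ τ t (u : X), τ ≤ t → N t (T t τ u) ≤ K * Real.exp (c * (t - τ)) * N τ u)
    (hK : 0 ≤ K) (hC : ∀ b, ∃ C, ∀ t ≤ b, N t (w t) ≤ C)
    (hLp : ∀ b, eLpNorm ((Iic b).indicator fun t => N t (w t)) p volume < ∞) (t : ℝ) :
    eLpNorm ((Iic t).indicator fun t => N t (w t)) p volume ≤
      ENNReal.ofReal normG * ENNReal.ofReal (K * Real.exp c * N t (w t)) := by
  obtain ⟨s, hts, hs⟩ := exists_Ioc_mul_sub_le c t
  obtain ⟨C, hC⟩ := hC (s + 1)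
  have hgrowth : ∀ ξ ∈ Ioc s (s + 1), ‖N ξ (w ξ)‖ ≤ K * Real.exp c * N t (w t) := by
    intro ξ hξ
    have htξ : t ≤ ξ := hts.trans hξ.1.le
    rw [Real.norm_of_nonneg (apply_nonneg _ _), hw t ξ htξ]
    exact (hBd t ξ _ htξ).trans (by gcongr; exact hs ξ hξ)
  calc eLpNorm ((Iic t).indicator fun t => N t (w t)) p volume
      ≤ eLpNorm (fun ξ => tailLength s (s + 1) ξ * N ξ (w ξ)) p volume := by
        refine eLpNorm_mono fun ξ => ?_
        by_cases hξ : ξ ≤ t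
        · rw [indicator_of_mem (mem_Iic.2 hξ), tailLength_of_le (by linarith) (hξ.trans hts)]
          simp
        · rw [indicator_of_notMem (by simpa using hξ), norm_zero]
          exact norm_nonneg _
    _ ≤ ENNReal.ofReal normG *
          eLpNorm ((Ioc s (s + 1)).indicator fun t => N t (w t)) q volume :=
        (hG.apply_tailLength_smul hw hwc hp hq (by linarith) hC (hLp _)).2
    _ ≤ ENNReal.ofReal normG * ENNReal.ofReal (K * Real.exp c * N t (w t)) := by
        gcongr
        refine (eLpNorm_indicator_le_of_forall_le measurableSet_Ioc hgrowth).trans_eq ?_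
        simp [Real.volume_Ioc]

theorem IsTrajectory.apply_le_rpow_mul [CompleteSpace X] {normG K c : ℝ}
    (hG : SolutionOperatorBound T (fun t => N t) p q normG) (hw : IsTrajectory T w)
    (hwc : Continuous w) (hq : 1 ≤ q) (hqp : q ≤ p)
    (hBd : ∀ τ t (u : X), τ ≤ t → N t (T t τ u) ≤ K * Real.exp (c * (t - τ)) * N τ u)
    (hK : 0 ≤ K) (hnormG : 0 ≤ normG) (hg : AEStronglyMeasurable fun t => N t (w t))
    (hC : ∀ b, ∃ C, ∀ t ≤ b, N t (w t) ≤ C)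
    (hLp : ∀ b, eLpNorm ((Iic b).indicator fun t => N t (w t)) p volume < ∞) {τ t : ℝ}
    (hτt : τ < t) :
    N τ (w τ) ≤ K * Real.exp c * normG ^ 2 *
      (t - τ) ^ (-(1 - (q⁻¹).toReal + (p⁻¹).toReal)) * N t (w t) := by
  have hq0 : q ≠ 0 := (zero_lt_one.trans_le hq).ne'
  have hp0 : p ≠ 0 := (zero_lt_one.trans_le (hq.trans hqp)).ne'
  set g := fun t => N t (w t)
  set β := 1 / q.toReal - 1 / p.toReal
  set L := eLpNorm ((Ioc τ t).indicator g) q volume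
  have hτt' : 0 < t - τ := sub_pos.2 hτt
  have hgrowth : 0 ≤ K * Real.exp c * g t := by have := apply_nonneg (N t) (w t); positivity
  obtain ⟨C, hCt⟩ := hC t
  have hsup : (t - τ) * g τ ≤ normG * L.toReal := by
    simpa [tailLength_of_le hτt.le le_rfl] using
      (hG.apply_tailLength_smul hw hwc hp0 hq0 hτt.le hCt (hLp t)).1 τ
  have hL : L ≤ ENNReal.ofReal (normG * (K * Real.exp c * g t) * (t - τ) ^ β) :=
    calc L ≤ eLpNorm ((Ioc τ t).indicator g) p volume * volume (Ioc τ t) ^ β :=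
          eLpNorm_indicator_le_eLpNorm_indicator_mul_rpow measurableSet_Ioc hg hqp
      _ ≤ eLpNorm ((Iic t).indicator g) p volume * ENNReal.ofReal ((t - τ) ^ β) := by
          rw [Real.volume_Ioc, ENNReal.ofReal_rpow_of_pos hτt']
          gcongr 1
          exact eLpNorm_mono fun _ => norm_indicator_le_of_subset Ioc_subset_Iic_self _ _
      _ ≤ ENNReal.ofReal normG * ENNReal.ofReal (K * Real.exp c * g t) *
            ENNReal.ofReal ((t - τ) ^ β) := by
          gcongr
          exact hw.eLpNorm_indicator_Iic_le hG hwc hp0 hq0 hBd hK hC hLp t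
      _ = _ := by
          rw [ENNReal.ofReal_mul (mul_nonneg hnormG hgrowth), ENNReal.ofReal_mul hnormG]
  have hLreal := ENNReal.toReal_le_of_le_ofReal (by positivity) hL
  have hexp : -(1 - (q⁻¹).toReal + (p⁻¹).toReal) = β - 1 := by
    simp only [β, ENNReal.toReal_inv, one_div]
    ring
  rw [hexp, Real.rpow_sub_one hτt'.ne', ← mul_le_mul_iff_of_pos_left hτt']
  calc (t - τ) * g τ ≤ normG * (normG * (K * Real.exp c * g t) * (t - τ) ^ β) :=
        hsup.trans (mul_le_mul_of_nonneg_left hLreal hnormG)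
    _ = (t - τ) * (K * Real.exp c * normG ^ 2 * ((t - τ) ^ β / (t - τ)) * g t) := by
        field_simp

end Trajectory

theorem apply_le_rpow_mul_of_mem_Fu {X : Type*} [NormedAddCommGroup X]
    [NormedSpace ℝ X] [CompleteSpace X] {T : ℝ → ℝ → X →L[ℝ] X} {N : ℝ → Seminorm ℝ X} {p q : ℝ≥0∞}
    {normG K c : ℝ} (hG : SolutionOperatorBound T (fun t => N t) p q normG)
    (hCoc : ∀ τ s t, τ ≤ s → s ≤ t → ∀ u, T t s (T s τ u) = T t τ u)
    (hCont : ∀ τ (u : X), ContinuousOn (fun t => T t τ u) (Ici τ))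
    (hBd : ∀ τ t (u : X), τ ≤ t → N t (T t τ u) ≤ K * Real.exp (c * (t - τ)) * N τ u)
    (hK : 0 ≤ K) (hnormG : 0 ≤ normG) (hNcont : ∀ t, Continuous (N t))
    (hNmeas : ∀ u : X, Measurable fun t => N t u) (hq : 1 ≤ q) (hqp : q ≤ p) {τ t : ℝ}
    {u : X} (hu : u ∈ Fu T (fun t => N t) p τ) (hτt : τ < t) :
    N τ u ≤ K * Real.exp c * normG ^ 2 *
      (t - τ) ^ (-(1 - (q⁻¹).toReal + (p⁻¹).toReal)) * N t (T t τ u) := by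
  have hp : 1 ≤ p := hq.trans hqp
  obtain ⟨w, hw, rfl, ⟨M, hM⟩, hLpτ⟩ :=
    exists_isTrajectory_of_mem_Fu (zero_lt_one.trans_le hp).ne' hCoc hu
  have hwc := hw.continuous hCont
  have hg : AEStronglyMeasurable (fun t => N t (w t)) :=
    (measurable_apply_of_continuous hNcont hNmeas hwc).aestronglyMeasurable
  have hC := hw.exists_bound_Iic hBd hK hM
  have hLp (b : ℝ) : eLpNorm ((Iic b).indicator fun t => N t (w t)) p volume < ∞ := by
    obtain ⟨C, hC⟩ := hC b
    refine eLpNorm_indicator_Iic_lt_top (C := C) hp hg hLpτ fun ξ hξ => ?_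
    rw [Real.norm_of_nonneg (apply_nonneg _ _)]
    exact hC ξ hξ.2
  rw [← hw τ t hτt.le]
  exact hw.apply_le_rpow_mul hG hwc hq hqp hBd hK hnormG hg hC hLp hτt

theorem one_sub_inv_add_inv_pos {p q : ℝ≥0∞} (hq : 1 ≤ q) (hqp : q ≤ p)
    (hpq : ¬(p = ∞ ∧ q = 1)) : 0 < 1 - (q⁻¹).toReal + (p⁻¹).toReal := by
  rcases eq_or_ne q 1 with rfl | hq1
  · have hp : p ≠ ∞ := fun h => hpq ⟨h, rfl⟩
    have : 0 < (p⁻¹).toReal := ENNReal.toReal_pos (ENNReal.inv_ne_zero.2 hp)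
      (ENNReal.inv_ne_top.2 (one_pos.trans_le hqp).ne')
    simpa using this
  · have : (q⁻¹).toReal < 1 :=
      ENNReal.toReal_lt_of_lt_ofReal (by simpa using ENNReal.inv_lt_one.2 (hq.lt_of_ne' hq1))
    linarith [ENNReal.toReal_nonneg (a := p⁻¹)]

theorem exists_pos_forall_mul_rpow_neg_lt (D : ℝ) {α ε : ℝ} (hα : 0 < α) (hε : 0 < ε) :
    ∃ T₀ > (0 : ℝ), ∀ s, T₀ ≤ s → D * s ^ (-α) < ε := by
  have hlim := (tendsto_rpow_neg_atTop hα).const_mul D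
  rw [mul_zero] at hlim
  obtain ⟨a, ha⟩ := eventually_atTop.1 (hlim.eventually (gt_mem_nhds hε))
  exact ⟨max a 1, one_pos.trans_le (le_max_right _ _),
    fun s hs => ha s ((le_max_left _ _).trans hs)⟩

theorem unstable_doubling_estimate_general
    {X : Type*} [NormedAddCommGroup X] [NormedSpace ℝ X] [CompleteSpace X]
    (T : ℝ → ℝ → X →L[ℝ] X) (N : ℝ → X → ℝ) (C ε K c normG : ℝ)
    (hN₂ : ∀ t (u : X), N t u ≤ C * Real.exp (ε * |t|) * ‖u‖)
    (hNadd : ∀ t (u v : X), N t (u + v) ≤ N t u + N t v)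
    (hNsmul : ∀ t (r : ℝ) (u : X), N t (r • u) = |r| * N t u)
    (hNmeas : ∀ u : X, Measurable fun t => N t u)
    (hCoc : ∀ τ s t, τ ≤ s → s ≤ t → ∀ u, T t s (T s τ u) = T t τ u)
    (hCont : ∀ τ (u : X), ContinuousOn (fun t => T t τ u) (Ici τ))
    (hBd : ∀ τ t (u : X), τ ≤ t → N t (T t τ u) ≤ K * Real.exp (c * (t - τ)) * N τ u)
    (hK : 0 < K) (hnormG : 0 < normG)
    (p q : ℝ≥0∞) (hq : 1 ≤ q) (hpq : q ≤ p) (hpq' : ¬(p = ∞ ∧ q = 1))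
    -- boundedness of the solution operator `G`, in both sup- and `L^p`-components:
    (hG : ∀ x y : ℝ → X, MemY1 N p x → MemY2 N q y → SolvesEq T x y →
      (∀ s, N s (x s) ≤ normG * (famLpNorm N q y).toReal) ∧
      famLpNorm N p x ≤ ENNReal.ofReal normG * famLpNorm N q y) :
    (∀ τ t (u : X), τ < t → u ∈ Fu T N p τ →
      N τ u ≤ 2 * K * Real.exp c * normG ^ 2 *
        (t - τ) ^ (-(1 - (q⁻¹).toReal + (p⁻¹).toReal)) * N t (T t τ u)) ∧
    ∃ T₀ > (0 : ℝ), ∀ τ t (u : X), u ∈ Fu T N p τ → T₀ ≤ t - τ →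
      2 * N τ u ≤ N t (T t τ u) := by
  -- Replace `N` by a family of seminorms: `⇑(Seminorm.of (N t) _ _)` is `N t` by `rfl`.
  obtain ⟨S, rfl⟩ : ∃ S : ℝ → Seminorm ℝ X, (fun t => ⇑(S t)) = N :=
    ⟨fun t => Seminorm.of (N t) (hNadd t) fun r u => by rw [hNsmul, Real.norm_eq_abs], rfl⟩
  beta_reduce at *
  have hestimate (τ t : ℝ) (u : X) (hτt : τ < t) (hu : u ∈ Fu T (fun t => S t) p τ) :=
    apply_le_rpow_mul_of_mem_Fu hG hCoc hCont hBd hK.le hnormG.le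
      (fun t => (S t).continuous_of_le_mul_norm (hN₂ t)) hNmeas hq hpq hu hτt
  refine ⟨fun τ t u hτt hu => ?_, ?_⟩
  · have hr := Real.rpow_nonneg (sub_pos.2 hτt).le (-(1 - (q⁻¹).toReal + (p⁻¹).toReal))
    have hy := apply_nonneg (S t) (T t τ u)
    have hbound : 0 ≤ K * Real.exp c * normG ^ 2 * (t - τ) ^ (-(1 - (q⁻¹).toReal + (p⁻¹).toReal)) *
        S t (T t τ u) := by positivity
    linarith [hestimate τ t u hτt hu]
  · obtain ⟨T₀, hT₀, hT₀s⟩ := exists_pos_forall_mul_rpow_neg_lt (K * Real.exp c * normG ^ 2)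
      (one_sub_inv_add_inv_pos hq hpq hpq') one_half_pos
    refine ⟨T₀, hT₀, fun τ t u hu hτt => ?_⟩
    have hu' := hestimate τ t u (by linarith) hu
    nlinarith [hT₀s (t - τ) hτt, apply_nonneg (S t) (T t τ u)]

/-- In the admissibility setting with `(p,q) ≠ (∞,1)`, for `u ∈ F^u_τ`
and `t > τ` one has
`‖u‖_τ ≤ 2 K e^c normG² (t-τ)^{-(1 - 1/q + 1/p)} ‖T t τ u‖_t`; consequently there is
`T₀ > 0` such that `‖T t τ u‖_t ≥ 2 ‖u‖_τ` whenever `t - τ ≥ T₀`. -/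
theorem unstable_doubling_estimate
    {X : Type*} [NormedAddCommGroup X] [NormedSpace ℝ X] [CompleteSpace X]
    (T : ℝ → ℝ → X →L[ℝ] X) (N : ℝ → X → ℝ) (C ε K c normG : ℝ)
    (hN₁ : ∀ t u, ‖u‖ ≤ N t u)
    (hN₂ : ∀ t (u : X), N t u ≤ C * Real.exp (ε * |t|) * ‖u‖)
    (hNadd : ∀ t (u v : X), N t (u + v) ≤ N t u + N t v)
    (hNsmul : ∀ t (r : ℝ) (u : X), N t (r • u) = |r| * N t u)
    (hNmeas : ∀ u : X, Measurable fun t => N t u)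
    (hId : ∀ t, T t t = ContinuousLinearMap.id ℝ X)
    (hCoc : ∀ τ s t, τ ≤ s → s ≤ t → ∀ u, T t s (T s τ u) = T t τ u)
    (hCont : ∀ τ (u : X), ContinuousOn (fun t => T t τ u) (Ici τ))
    (hContB : ∀ τ (u : X), ContinuousOn (fun s => T τ s u) (Iic τ))
    (hBd : ∀ τ t (u : X), τ ≤ t → N t (T t τ u) ≤ K * Real.exp (c * (t - τ)) * N τ u)
    (hK : 0 < K) (hnormG : 0 < normG)
    (p q : ℝ≥0∞) (hq : 1 ≤ q) (hpq : q ≤ p) (hpq' : ¬(p = ∞ ∧ q = 1))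
    -- boundedness of the solution operator `G`, in both sup- and `L^p`-components:
    (hG : ∀ x y : ℝ → X, MemY1 N p x → MemY2 N q y → SolvesEq T x y →
      (∀ s, N s (x s) ≤ normG * (famLpNorm N q y).toReal) ∧
      famLpNorm N p x ≤ ENNReal.ofReal normG * famLpNorm N q y) :
    (∀ τ t (u : X), τ < t → u ∈ Fu T N p τ →
      N τ u ≤ 2 * K * Real.exp c * normG ^ 2 *
        (t - τ) ^ (-(1 - (q⁻¹).toReal + (p⁻¹).toReal)) * N t (T t τ u)) ∧
    ∃ T₀ > (0 : ℝ), ∀ τ t (u : X), u ∈ Fu T N p τ → T₀ ≤ t - τ →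
      2 * N τ u ≤ N t (T t τ u) :=
  unstable_doubling_estimate_general T N C ε K c normG hN₂ hNadd hNsmul hNmeas hCoc hCont hBd hK
    hnormG p q hq hpq hpq' hG
end

section
/- If (T(t,τ))_{t≥τ} admits an exponential dichotomy with respect to the family of norms ‖·‖_t with stable subspaces X^s(τ) = P(τ)X and unstable subspaces X^u(τ) = Ker P(τ), then X^s(τ) = F^s_τ and X^u(τ) = F^u_τ for every τ ∈ ℝ; consequently the family of dichotomic projections P(τ) is unique. -/
open MeasureTheory Set Filter
open scoped ENNReal

/-- Exponential dichotomy of the evolutionary family `T` with respect to the family of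
norms `N`, with projections `P t`, inverse maps `S τ t` (the inverses of
`T t τ : Ker P τ → Ker P t`, applied after `Q t = I - P t`), and constants `a < 0 < b`,
`D > 0`. -/
def IsDichotomy {X : Type*} [NormedAddCommGroup X] [NormedSpace ℝ X]
    (T : ℝ → ℝ → X →L[ℝ] X) (N : ℝ → X → ℝ)
    (P : ℝ → X →L[ℝ] X) (S : ℝ → ℝ → X →L[ℝ] X) (a b D : ℝ) : Prop :=
  a < 0 ∧ 0 < b ∧ 0 < D ∧
  (∀ t, (P t).comp (P t) = P t) ∧
  (∀ τ t, τ ≤ t → (P t).comp (T t τ) = (T t τ).comp (P τ)) ∧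
  (∀ τ t, τ ≤ t → ∀ u, T t τ (S τ t (u - P t u)) = u - P t u) ∧
  (∀ τ t, τ ≤ t → ∀ u, S τ t (T t τ u - P t (T t τ u)) = u - P τ u) ∧
  (∀ τ t, τ ≤ t → ∀ u, P τ (S τ t (u - P t u)) = 0) ∧
  (∀ τ t u, τ ≤ t → N t (T t τ (P τ u)) ≤ D * Real.exp (a * (t - τ)) * N τ u) ∧
  (∀ τ t u, τ ≤ t → N τ (S τ t (u - P t u)) ≤ D * Real.exp (-b * (t - τ)) * N t u)

/-!
On `P(τ)X` the forward orbit decays like `e^{a(t-τ)}`, and a point of `Ker P(τ)` has the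
backward trajectory `t ↦ S(t,τ)x`, which decays like `e^{-b(τ-t)}`; an exponentially
decaying function is bounded and lies in `L^p`. Conversely, if the forward orbit of `x` is
bounded by `M`, then for every `t ≥ τ` the unstable part `x - P(τ)x = S(τ,t) Q(t) T(t,τ) x`
has norm at most `D e^{-b(t-τ)} M`, so it vanishes; dually, along a bounded backward
trajectory `P(τ)x = T(τ,t) P(t) φ(t)` has norm at most `D e^{a(τ-t)} M`. Hence `P(τ)X` and
`Ker P(τ)` are determined by `T`, and so is the idempotent `P(τ)`.
-/

open Real Topology

lemma integrable_exp_mul_abs {γ : ℝ} (hγ : γ < 0) :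
    Integrable fun t : ℝ => exp (γ * |t|) := by
  refine (by fun_prop : Continuous fun t : ℝ => exp (γ * |t|)).locallyIntegrable
    |>.integrable_of_isBigO_atTop_of_norm_isNegInvariant (g := fun t => exp (γ * t)) ?_ ?_ ?_
  · exact ae_of_all _ fun t => by simp
  · refine (Asymptotics.isBigO_refl _ _).congr' ?_ EventuallyEq.rfl
    filter_upwards [eventually_ge_atTop 0] with t ht
    rw [abs_of_nonneg ht]
  · exact ⟨Ioi 0, Ioi_mem_atTop 0, by simpa using exp_neg_integrableOn_Ioi 0 (neg_pos.2 hγ)⟩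

lemma exp_mul_abs_le_one {γ : ℝ} (hγ : γ ≤ 0) (t : ℝ) : exp (γ * |t|) ≤ 1 :=
  exp_le_one_iff.2 (mul_nonpos_of_nonpos_of_nonneg hγ (abs_nonneg t))

lemma memLp_exp_mul_abs_sub {γ : ℝ} (hγ : γ < 0) (τ : ℝ) (p : ℝ≥0∞) :
    MemLp (fun t : ℝ => exp (γ * |t - τ|)) p := by
  have hmeas : AEStronglyMeasurable (fun t : ℝ => exp (γ * |t - τ|)) :=
    (by fun_prop : Continuous fun t : ℝ => exp (γ * |t - τ|)).aestronglyMeasurable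
  rcases eq_or_ne p 0 with rfl | hp0
  · exact memLp_zero_iff_aestronglyMeasurable.2 hmeas
  rcases eq_or_ne p ∞ with rfl | hp_top
  · refine memLp_top_of_bound hmeas 1 (ae_of_all _ fun t => ?_)
    rw [norm_of_nonneg (exp_pos _).le]
    exact exp_mul_abs_le_one hγ.le _
  · refine (integrable_norm_rpow_iff hmeas hp0 hp_top).1 ?_
    have hr : 0 < p.toReal := ENNReal.toReal_pos hp0 hp_top
    refine ((integrable_exp_mul_abs (mul_neg_of_neg_of_pos hγ hr)).comp_sub_right τ).congr
      (ae_of_all _ fun t => ?_)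
    dsimp only
    rw [norm_of_nonneg (exp_pos _).le, ← exp_mul]
    ring_nf

lemma famLpNorm_le_eLpNorm {X : Type*} [NormedAddCommGroup X] {N : ℝ → X → ℝ} {p : ℝ≥0∞}
    (hp : p ≠ 0) {f : ℝ → X} {g : ℝ → ℝ} (hfg : ∀ t, N t (f t) ≤ g t) :
    famLpNorm N p f ≤ eLpNorm g p := by
  have hle : ∀ t, ENNReal.ofReal (N t (f t)) ≤ ‖g t‖ₑ := fun t =>
    (ENNReal.ofReal_le_ofReal (hfg t)).trans (ofReal_le_enorm _)
  unfold famLpNorm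
  split_ifs with hp_top
  · rw [hp_top, eLpNorm_exponent_top]
    exact essSup_mono_ae (ae_of_all _ hle)
  · rw [eLpNorm_eq_eLpNorm' hp hp_top, eLpNorm']
    gcongr with t
    exact hle t

lemma bounded_and_famLpNorm_ite_lt_top {X : Type*} [NormedAddCommGroup X] {N : ℝ → X → ℝ}
    (hN₀ : ∀ t, N t 0 = 0) {p : ℝ≥0∞} (hp : p ≠ 0) {q : ℝ → Prop} [DecidablePred q]
    {g : ℝ → X} {B γ τ : ℝ} (hB : 0 ≤ B) (hγ : γ < 0)
    (hg : ∀ t, q t → N t (g t) ≤ B * exp (γ * |t - τ|)) :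
    (∃ M, ∀ t, q t → N t (g t) ≤ M) ∧ famLpNorm N p (fun t => if q t then g t else 0) < ∞ := by
  refine ⟨⟨B, fun t ht => (hg t ht).trans (mul_le_of_le_one_right hB
    (exp_mul_abs_le_one hγ.le _))⟩, ?_⟩
  refine (famLpNorm_le_eLpNorm hp fun t => ?_).trans_lt
    (((memLp_exp_mul_abs_sub hγ τ p).const_mul B).eLpNorm_lt_top)
  split_ifs with ht
  · exact hg t ht
  · rw [hN₀]
    positivity

lemma nonpos_of_le_mul_exp_neg {x A κ : ℝ} (hκ : 0 < κ)
    (h : ∀ s, 0 ≤ s → x ≤ A * exp (-κ * s)) : x ≤ 0 := by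
  have hlim : Tendsto (fun s => A * exp (-κ * s)) atTop (𝓝 0) := by
    simpa [neg_mul] using
      (tendsto_exp_neg_atTop_nhds_zero.comp (tendsto_id.const_mul_atTop hκ)).const_mul A
  exact ge_of_tendsto hlim ((eventually_ge_atTop 0).mono h)

namespace IsDichotomy

variable {X : Type*} [NormedAddCommGroup X] [NormedSpace ℝ X] {T : ℝ → ℝ → X →L[ℝ] X}
  {N : ℝ → X → ℝ} {P : ℝ → X →L[ℝ] X} {S : ℝ → ℝ → X →L[ℝ] X} {a b D : ℝ} {p : ℝ≥0∞}

lemma isIdempotentElem (hd : IsDichotomy T N P S a b D) (t : ℝ) : IsIdempotentElem (P t) :=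
  hd.2.2.2.1 t

lemma range_subset_Fs (hd : IsDichotomy T N P S a b D) (hN₁ : ∀ t u, ‖u‖ ≤ N t u)
    (hN₀ : ∀ t, N t 0 = 0) (hp : p ≠ 0) (τ : ℝ) : range (P τ) ⊆ Fs T N p τ := by
  obtain ⟨ha, -, hD, -, -, -, -, -, hests, -⟩ := hd
  rintro _ ⟨u, rfl⟩
  refine bounded_and_famLpNorm_ite_lt_top (τ := τ) hN₀ hp
    (mul_nonneg hD.le ((norm_nonneg u).trans (hN₁ τ u))) ha fun t ht => ?_
  calc N t (T t τ (P τ u)) ≤ D * exp (a * (t - τ)) * N τ u := hests τ t u ht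
    _ = D * N τ u * exp (a * |t - τ|) := by rw [abs_of_nonneg (sub_nonneg.2 ht)]; ring

lemma Fs_subset_range (hd : IsDichotomy T N P S a b D) (hN₁ : ∀ t u, ‖u‖ ≤ N t u) (τ : ℝ) :
    Fs T N p τ ⊆ range (P τ) := by
  obtain ⟨-, hb, hD, -, -, -, hST, -, -, hestu⟩ := hd
  rintro x ⟨⟨M, hM⟩, -⟩
  have hdecay : N τ (x - P τ x) ≤ 0 := by
    refine nonpos_of_le_mul_exp_neg (A := D * M) hb fun s hs => ?_
    have hτs : τ ≤ τ + s := le_add_of_nonneg_right hs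
    calc N τ (x - P τ x)
        = N τ (S τ (τ + s) (T (τ + s) τ x - P (τ + s) (T (τ + s) τ x))) := by rw [hST τ _ hτs]
      _ ≤ D * exp (-b * (τ + s - τ)) * N (τ + s) (T (τ + s) τ x) := hestu τ _ _ hτs
      _ ≤ D * exp (-b * (τ + s - τ)) * M := by gcongr; exact hM _ hτs
      _ = D * M * exp (-b * s) := by ring_nf
  have hx : x - P τ x = 0 := norm_le_zero_iff.1 ((hN₁ τ _).trans hdecay)
  exact ⟨x, (sub_eq_zero.1 hx).symm⟩

lemma ker_subset_Fu (hd : IsDichotomy T N P S a b D) (hN₁ : ∀ t u, ‖u‖ ≤ N t u)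
    (hN₀ : ∀ t, N t 0 = 0) (hId : ∀ t, T t t = ContinuousLinearMap.id ℝ X)
    (hCoc : ∀ τ s t, τ ≤ s → s ≤ t → ∀ u, T t s (T s τ u) = T t τ u) (hp : p ≠ 0) (τ : ℝ) :
    {u : X | P τ u = 0} ⊆ Fu T N p τ := by
  obtain ⟨-, hb, hD, -, hPT, hTS, hST, hPS, -, hestu⟩ := hd
  intro x (hx : P τ x = 0)
  have hQx : x - P τ x = x := by rw [hx, sub_zero]
  refine ⟨fun t => S t τ x, ?_, fun s t hst htτ => ?_, ?_⟩
  · simpa [hId, hQx] using hST τ τ le_rfl x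
  · have hsτ := hst.trans htτ
    have hTx : T τ s (S s τ x) = x := by simpa [hQx] using hTS s τ hsτ x
    have hPx : P s (S s τ x) = 0 := by simpa [hQx] using hPS s τ hsτ x
    have hPTx : P t (T t s (S s τ x)) = 0 := by
      rw [← ContinuousLinearMap.comp_apply, hPT s t hst, ContinuousLinearMap.comp_apply, hPx,
        map_zero]
    simpa [hCoc s t τ hst htτ, hTx, hx, hPTx] using hST t τ htτ (T t s (S s τ x))
  refine bounded_and_famLpNorm_ite_lt_top (τ := τ) hN₀ hp
    (mul_nonneg hD.le ((norm_nonneg x).trans (hN₁ τ x))) (neg_lt_zero.2 hb) fun t ht => ?_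
  calc N t (S t τ x) = N t (S t τ (x - P τ x)) := by rw [hQx]
    _ ≤ D * exp (-b * (τ - t)) * N τ x := hestu t τ x ht
    _ = D * N τ x * exp (-b * |t - τ|) := by
      rw [abs_of_nonpos (sub_nonpos.2 ht), neg_sub]; ring

lemma Fu_subset_ker (hd : IsDichotomy T N P S a b D) (hN₁ : ∀ t u, ‖u‖ ≤ N t u) (τ : ℝ) :
    Fu T N p τ ⊆ {u : X | P τ u = 0} := by
  obtain ⟨ha, -, hD, -, hPT, -, -, -, hests, -⟩ := hd
  rintro x ⟨φ, rfl, hφ, ⟨M, hM⟩, -⟩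
  have hdecay : N τ (P τ (φ τ)) ≤ 0 := by
    refine nonpos_of_le_mul_exp_neg (A := D * M) (neg_pos.2 ha) fun s hs => ?_
    have hsτ : τ - s ≤ τ := sub_le_self τ hs
    calc N τ (P τ (φ τ))
        = N τ (T τ (τ - s) (P (τ - s) (φ (τ - s)))) := by
          rw [hφ _ _ hsτ le_rfl, ← ContinuousLinearMap.comp_apply, hPT _ _ hsτ,
            ContinuousLinearMap.comp_apply]
      _ ≤ D * exp (a * (τ - (τ - s))) * N (τ - s) (φ (τ - s)) := hests _ _ _ hsτ
      _ ≤ D * exp (a * (τ - (τ - s))) * M := by gcongr; exact hM _ hsτ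
      _ = D * M * exp (- -a * s) := by ring_nf
  exact norm_le_zero_iff.1 ((hN₁ τ _).trans hdecay)

lemma range_eq_Fs (hd : IsDichotomy T N P S a b D) (hN₁ : ∀ t u, ‖u‖ ≤ N t u)
    (hN₀ : ∀ t, N t 0 = 0) (hp : p ≠ 0) (τ : ℝ) : range (P τ) = Fs T N p τ :=
  (hd.range_subset_Fs hN₁ hN₀ hp τ).antisymm (hd.Fs_subset_range hN₁ τ)

lemma ker_eq_Fu (hd : IsDichotomy T N P S a b D) (hN₁ : ∀ t u, ‖u‖ ≤ N t u)
    (hN₀ : ∀ t, N t 0 = 0) (hId : ∀ t, T t t = ContinuousLinearMap.id ℝ X)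
    (hCoc : ∀ τ s t, τ ≤ s → s ≤ t → ∀ u, T t s (T s τ u) = T t τ u) (hp : p ≠ 0) (τ : ℝ) :
    {u : X | P τ u = 0} = Fu T N p τ :=
  (hd.ker_subset_Fu hN₁ hN₀ hId hCoc hp τ).antisymm (hd.Fu_subset_ker hN₁ τ)

end IsDichotomy

theorem dichotomic_projections_unique_general
    {X : Type*} [NormedAddCommGroup X] [NormedSpace ℝ X]
    (T : ℝ → ℝ → X →L[ℝ] X) (N : ℝ → X → ℝ)
    (hN₁ : ∀ t u, ‖u‖ ≤ N t u)
    (hNsmul : ∀ t (r : ℝ) (u : X), N t (r • u) = |r| * N t u)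
    (hId : ∀ t, T t t = ContinuousLinearMap.id ℝ X)
    (hCoc : ∀ τ s t, τ ≤ s → s ≤ t → ∀ u, T t s (T s τ u) = T t τ u)
    (p : ℝ≥0∞) (hp : 1 ≤ p)
    (P : ℝ → X →L[ℝ] X) (S : ℝ → ℝ → X →L[ℝ] X) (a b D : ℝ)
    (hdich : IsDichotomy T N P S a b D) :
    (∀ τ : ℝ, Set.range (P τ) = Fs T N p τ ∧ {u : X | P τ u = 0} = Fu T N p τ) ∧
    (∀ (P' : ℝ → X →L[ℝ] X) (S' : ℝ → ℝ → X →L[ℝ] X) (a' b' D' : ℝ),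
      IsDichotomy T N P' S' a' b' D' → ∀ τ, P' τ = P τ) := by
  have hN₀ : ∀ t, N t 0 = 0 := fun t => by simpa using hNsmul t 0 0
  have hp₀ : p ≠ 0 := (zero_lt_one.trans_le hp).ne'
  have hsplit : ∀ {P : ℝ → X →L[ℝ] X} {S : ℝ → ℝ → X →L[ℝ] X} {a b D : ℝ},
      IsDichotomy T N P S a b D → ∀ τ,
        Set.range (P τ) = Fs T N p τ ∧ {u : X | P τ u = 0} = Fu T N p τ := fun hd τ =>
    ⟨hd.range_eq_Fs hN₁ hN₀ hp₀ τ, hd.ker_eq_Fu hN₁ hN₀ hId hCoc hp₀ τ⟩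
  refine ⟨hsplit hdich, fun P' S' a' b' D' hd' τ => ?_⟩
  obtain ⟨hrange, hker⟩ := hsplit hdich τ
  obtain ⟨hrange', hker'⟩ := hsplit hd' τ
  exact ContinuousLinearMap.IsIdempotentElem.ext (hd'.isIdempotentElem τ)
    (hdich.isIdempotentElem τ) ⟨SetLike.coe_injective (hrange'.trans hrange.symm),
      SetLike.coe_injective (hker'.trans hker.symm)⟩

/-- **Comment 3.8.** Under an exponential dichotomy, the stable and
unstable subspaces of the dichotomy coincide with `F^s_τ` and `F^u_τ`:
`range (P τ) = F^s_τ` and `Ker (P τ) = F^u_τ`; consequently the family of dichotomic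
projections is unique. -/
theorem dichotomic_projections_unique
    {X : Type*} [NormedAddCommGroup X] [NormedSpace ℝ X] [CompleteSpace X]
    (T : ℝ → ℝ → X →L[ℝ] X) (N : ℝ → X → ℝ) (C ε K c : ℝ)
    (hN₁ : ∀ t u, ‖u‖ ≤ N t u)
    (hN₂ : ∀ t (u : X), N t u ≤ C * Real.exp (ε * |t|) * ‖u‖)
    (hNadd : ∀ t (u v : X), N t (u + v) ≤ N t u + N t v)
    (hNsmul : ∀ t (r : ℝ) (u : X), N t (r • u) = |r| * N t u)
    (hNmeas : ∀ u : X, Measurable fun t => N t u)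
    (hId : ∀ t, T t t = ContinuousLinearMap.id ℝ X)
    (hCoc : ∀ τ s t, τ ≤ s → s ≤ t → ∀ u, T t s (T s τ u) = T t τ u)
    (hCont : ∀ τ (u : X), ContinuousOn (fun t => T t τ u) (Ici τ))
    (hContB : ∀ τ (u : X), ContinuousOn (fun s => T τ s u) (Iic τ))
    (hBd : ∀ τ t (u : X), τ ≤ t → N t (T t τ u) ≤ K * Real.exp (c * (t - τ)) * N τ u)
    (p : ℝ≥0∞) (hp : 1 ≤ p)
    (P : ℝ → X →L[ℝ] X) (S : ℝ → ℝ → X →L[ℝ] X) (a b D : ℝ)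
    (hdich : IsDichotomy T N P S a b D) :
    (∀ τ : ℝ, Set.range (P τ) = Fs T N p τ ∧ {u : X | P τ u = 0} = Fu T N p τ) ∧
    (∀ (P' : ℝ → X →L[ℝ] X) (S' : ℝ → ℝ → X →L[ℝ] X) (a' b' D' : ℝ),
      IsDichotomy T N P' S' a' b' D' → ∀ τ, P' τ = P τ) :=
  dichotomic_projections_unique_general T N hN₁ hNsmul hId hCoc p hp P S a b D hdich
end

section
/- Let B : ℝ → B(X) be strongly continuous with ‖B(t)‖ ≤ Me^{−ε|t|}φ(t) for φ ∈ L^q(ℝ), and define P : (L^p∩C_b) → L^q by (Px)(t) = B(t)x(t). Then P is a bounded linear operator with ‖P‖ ≤ MC‖φ‖_{L^q}. -/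
open MeasureTheory Set Filter
open scoped ENNReal

/-!
Pointwise, `‖B t (x t)‖_t ≤ C e^{ε|t|} ‖B t‖ ‖x t‖ ≤ M C φ t ‖x t‖_t`: the weight
`e^{ε|t|}` coming from the comparison of norms is cancelled by the decay `e^{-ε|t|}` of `B`.
Taking the `L^q` norm of this bound and `‖x t‖_t ≤ sup_s ‖x s‖_s` gives the estimate.
-/

lemma famLpNorm_le_eLpNorm_of_le {X : Type*} [NormedAddCommGroup X] (N : ℝ → X → ℝ)
    {q : ℝ≥0∞} (hq : q ≠ 0) {g : ℝ → X} {h : ℝ → ℝ} (hgh : ∀ t, N t (g t) ≤ h t) :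
    famLpNorm N q g ≤ eLpNorm h q volume := by
  have hle : ∀ t, ENNReal.ofReal (N t (g t)) ≤ ‖h t‖ₑ := fun t =>
    (ENNReal.ofReal_le_ofReal (hgh t)).trans (Real.ofReal_le_enorm _)
  rcases eq_or_ne q ∞ with rfl | hq_top
  · simp only [famLpNorm, eLpNorm_exponent_top, eLpNormEssSup]
    exact essSup_mono_ae (Eventually.of_forall hle)
  · simp only [famLpNorm, hq_top, if_false, eLpNorm, hq, eLpNorm']
    gcongr with t
    exact hle t

/-- The positive parts of `C` and `M` spare us any sign conditions on them. -/
lemma apply_le_of_opNorm_le_exp_mul {𝕜 E X : Type*} [NontriviallyNormedField 𝕜]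
    [NormedAddCommGroup E] [NormedSpace 𝕜 E] [NormedAddCommGroup X] [NormedSpace 𝕜 X]
    (N : ℝ → X → ℝ) {C ε M : ℝ} (hN : ∀ t u, N t u ≤ C * Real.exp (ε * |t|) * ‖u‖)
    {B : ℝ → E →L[𝕜] X} {φ : ℝ → ℝ} (hφ : ∀ t, 0 ≤ φ t)
    (hB : ∀ t, ‖B t‖ ≤ M * Real.exp (-ε * |t|) * φ t) (t : ℝ) (u : E) :
    N t (B t u) ≤ max M 0 * max C 0 * φ t * ‖u‖ := by
  have hexp : Real.exp (ε * |t|) * Real.exp (-ε * |t|) = 1 := by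
    rw [← Real.exp_add, neg_mul, add_neg_cancel, Real.exp_zero]
  have hB' : ‖B t‖ ≤ max M 0 * Real.exp (-ε * |t|) * φ t := by
    refine (hB t).trans ?_
    gcongr
    · exact hφ t
    · exact le_max_left M 0
  calc N t (B t u) ≤ C * Real.exp (ε * |t|) * ‖B t u‖ := hN t _
    _ ≤ max C 0 * Real.exp (ε * |t|) * (‖B t‖ * ‖u‖) := by
        gcongr
        · exact le_max_left C 0
        · exact (B t).le_opNorm u
    _ ≤ max C 0 * Real.exp (ε * |t|) * (max M 0 * Real.exp (-ε * |t|) * φ t * ‖u‖) := by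
        gcongr
    _ = max M 0 * max C 0 * φ t * ‖u‖ * (Real.exp (ε * |t|) * Real.exp (-ε * |t|)) := by ring
    _ = max M 0 * max C 0 * φ t * ‖u‖ := by rw [hexp, mul_one]

lemma ENNReal.ofReal_max_mul_max_le (a b : ℝ) :
    ENNReal.ofReal (max a 0 * max b 0) ≤ ENNReal.ofReal (a * b) := by
  rcases le_total a 0 with ha | ha
  · simp [max_eq_right ha]
  rcases le_total b 0 with hb | hb
  · simp [max_eq_right hb]
  · rw [max_eq_left ha, max_eq_left hb]

theorem perturbation_operator_bound_general
    {X : Type*} [NormedAddCommGroup X] [NormedSpace ℝ X]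
    (N : ℝ → X → ℝ) (C ε M : ℝ)
    (hN₁ : ∀ t u, ‖u‖ ≤ N t u)
    (hN₂ : ∀ t (u : X), N t u ≤ C * Real.exp (ε * |t|) * ‖u‖)
    (q : ℝ≥0∞) (hq : 1 ≤ q)
    (B : ℝ → X →L[ℝ] X)
    (φ : ℝ → ℝ) (hφnn : ∀ t, 0 ≤ φ t)
    (hB : ∀ t, ‖B t‖ ≤ M * Real.exp (-ε * |t|) * φ t) :
    ∀ (x : ℝ → X) (Msup : ℝ), Continuous x → (∀ t, N t (x t) ≤ Msup) →
      famLpNorm N q (fun t => B t (x t)) ≤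
        ENNReal.ofReal (M * C) * eLpNorm φ q volume * ENNReal.ofReal Msup := by
  intro x Msup _ hx
  set K := max M 0 * max C 0
  have hK : 0 ≤ K := by positivity
  have hMsup : 0 ≤ Msup := (norm_nonneg _).trans ((hN₁ 0 (x 0)).trans (hx 0))
  have hpt : ∀ t, N t (B t (x t)) ≤ (K * Msup) • φ t := fun t =>
    calc N t (B t (x t)) ≤ K * φ t * ‖x t‖ := apply_le_of_opNorm_le_exp_mul N hN₂ hφnn hB t _
      _ ≤ K * φ t * Msup := by gcongr; exacts [mul_nonneg hK (hφnn t), (hN₁ t _).trans (hx t)]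
      _ = (K * Msup) • φ t := by rw [smul_eq_mul]; ring
  calc famLpNorm N q (fun t => B t (x t))
      ≤ eLpNorm ((K * Msup) • φ) q volume :=
        famLpNorm_le_eLpNorm_of_le N (zero_lt_one.trans_le hq).ne' hpt
    _ = ENNReal.ofReal K * ENNReal.ofReal Msup * eLpNorm φ q volume := by
        rw [eLpNorm_const_smul, Real.enorm_eq_ofReal (by positivity), ENNReal.ofReal_mul hK]
    _ ≤ ENNReal.ofReal (M * C) * eLpNorm φ q volume * ENNReal.ofReal Msup := by
        rw [mul_right_comm]
        gcongr ?_ * _ * _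
        exact ENNReal.ofReal_max_mul_max_le M C

/-- If `B : ℝ → B(X)` is strongly continuous with
`‖B t‖ ≤ M e^{-ε|t|} φ t` for some `φ ∈ L^q(ℝ)`, then the multiplication operator
`(Px) t = B t (x t)` maps `L^p ∩ C_b` into `L^q` with `‖Px‖_q ≤ M C ‖φ‖_q ‖x‖_∞`
(hence `‖P‖ ≤ M C ‖φ‖_{L^q}`, since the `Y₁`-norm dominates the sup-norm). -/
theorem perturbation_operator_bound
    {X : Type*} [NormedAddCommGroup X] [NormedSpace ℝ X] [CompleteSpace X]
    (N : ℝ → X → ℝ) (C ε M : ℝ)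
    (hN₁ : ∀ t u, ‖u‖ ≤ N t u)
    (hN₂ : ∀ t (u : X), N t u ≤ C * Real.exp (ε * |t|) * ‖u‖)
    (q : ℝ≥0∞) (hq : 1 ≤ q)
    (B : ℝ → X →L[ℝ] X) (hBcont : ∀ u : X, Continuous fun t => B t u)
    (φ : ℝ → ℝ) (hφ : MemLp φ q volume) (hφnn : ∀ t, 0 ≤ φ t)
    (hB : ∀ t, ‖B t‖ ≤ M * Real.exp (-ε * |t|) * φ t) :
    ∀ (x : ℝ → X) (Msup : ℝ), Continuous x → (∀ t, N t (x t) ≤ Msup) →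
      famLpNorm N q (fun t => B t (x t)) ≤
        ENNReal.ofReal (M * C) * eLpNorm φ q volume * ENNReal.ofReal Msup :=
  perturbation_operator_bound_general N C ε M hN₁ hN₂ q hq B φ hφnn hB
end
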